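/- Let p > 0 and h > 0, and set s = sinh(ph), c = cosh(ph). With b₁, b₂, c₁, d₁ as in the exponential B-spline coefficient definitions, one has −b₁ − p·c₁·e^{ph} + p·d₁·e^{−ph} = b₂·(c − 1) = p(c−1)/(2(phc−s)). (This is the matching of first derivatives of the exponential B-spline across the interior knot x_{i−1}.) -/
import Mathlib

theorem sinh_lt_mul_cosh {x : ℝ} (hx : 0 < x) : Real.sinh x < x * Real.cosh x := by
  have key : StrictMonoOn (fun y => y * Real.cosh y - Real.sinh y) (Set.Ici 0) := by
    apply strictMonoOn_of_deriv_pos (convex_Ici 0)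
    · fun_prop
    · intro y hy
      rw [interior_Ici] at hy
      have h1 : HasDerivAt (fun y : ℝ => y * Real.cosh y - Real.sinh y)
          (1 * Real.cosh y + y * Real.sinh y - Real.cosh y) y :=
        ((hasDerivAt_id y).mul (Real.hasDerivAt_cosh y)).sub (Real.hasDerivAt_sinh y)
      rw [h1.deriv]
      have h2 := Real.sinh_pos_iff.2 hy
      have := mul_pos (Set.mem_Ioi.1 hy) h2
      linarith
  have := key (Set.self_mem_Ici) (Set.mem_Ici.2 hx.le) hx
  simpa using this

theorem expBspline_first_deriv_match_at_interior_knot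
    (p h : ℝ) (hp : 0 < p) (hh : 0 < h)
    (s c b₁ b₂ c₁ d₁ : ℝ)
    (hs : s = Real.sinh (p * h)) (hc : c = Real.cosh (p * h))
    (hb₁ : b₁ = p / 2 * ((c * (c - 1) + s ^ 2) / ((p * h * c - s) * (1 - c))))
    (hb₂ : b₂ = p / (2 * (p * h * c - s)))
    (hc₁ : c₁ = 1 / 4 * ((Real.exp (-(p * h)) * (1 - c) + s * (Real.exp (-(p * h)) - 1)) /
        ((p * h * c - s) * (1 - c))))
    (hd₁ : d₁ = 1 / 4 * ((Real.exp (p * h) * (c - 1) + s * (Real.exp (p * h) - 1)) /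
        ((p * h * c - s) * (1 - c)))) :
    -b₁ - p * c₁ * Real.exp (p * h) + p * d₁ * Real.exp (-(p * h)) = b₂ * (c - 1) ∧
    b₂ * (c - 1) = p * (c - 1) / (2 * (p * h * c - s)) := by
  have hx : 0 < p * h := mul_pos hp hh
  have hden : p * h * c - s ≠ 0 := by
    rw [hs, hc]; have := sinh_lt_mul_cosh hx; linarith
  have hc1 : (1:ℝ) < c := by rw [hc]; exact Real.one_lt_cosh.2 hx.ne'
  have h1c : 1 - c ≠ 0 := by linarith
  have hexp : Real.exp (-(p * h)) = (Real.exp (p * h))⁻¹ := Real.exp_neg _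
  have hE : Real.exp (p * h) ≠ 0 := (Real.exp_pos _).ne'
  constructor
  · subst hb₁ hb₂ hc₁ hd₁
    rw [hexp]
    have hsc : s = (Real.exp (p*h) - (Real.exp (p*h))⁻¹) / 2 := by
      rw [hs, Real.sinh_eq, hexp]
    field_simp
    rw [hsc] at hden ⊢
    field_simp at hden ⊢
    ring
  · rw [hb₂]; field_simp
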